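/- Let d ≥ 1 be an integer and let K : ℤ^d → ℝ be absolutely summable, i.e., ∑_{z ∈ ℤ^d} |K(z)| < ∞. Then for every continuous compactly supported function V : ℝ^d → ℝ, lim_{N→∞} N^{−d} ∑_{x,x' ∈ ℤ^d} V(x/N) K(x − x') V(x'/N) = ( ∑_{z ∈ ℤ^d} K(z) ) ∫_{ℝ^d} V(y)² dy. -/

import Mathlib

/-!
Substituting `z = x - x'`, the normalized double sum becomes `∑_z K(z) A_N(z)`, where
`A_N(z) = N^{-d} ∑_x V(x/N) V(x/N - z/N)` is a Riemann sum. For fixed `z`, uniform continuity of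
`V` and the convergence of the Riemann sums of `V²` and `|V|` give `A_N(z) → ∫ V²`. Since
`|A_N(z)| ≤ sup |V| · N^{-d} ∑_x |V(x/N)|` is bounded uniformly in `z` and `K` is absolutely
summable, dominated convergence for series passes to the limit under `∑_z`.
-/

open MeasureTheory Filter Topology

/-- The point `x/N ∈ ℝ^d` associated to a lattice point `x ∈ ℤ^d`. -/
noncomputable def latE (d N : ℕ) (x : Fin d → ℤ) : EuclideanSpace ℝ (Fin d) :=
  WithLp.toLp 2 fun i => (x i : ℝ) / N

open scoped Pointwise

noncomputable def latticePoint {ι : Type*} (N : ℕ) (v : ι → ℤ) : ι → ℝ := fun i => (v i : ℝ) / N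

namespace latticePoint

variable {ι : Type*}

lemma sub (N : ℕ) (v w : ι → ℤ) :
    latticePoint N (v - w) = latticePoint N v - latticePoint N w := by
  ext i
  simp [latticePoint, sub_div]

lemma injective {N : ℕ} (hN : N ≠ 0) : Function.Injective (latticePoint (ι := ι) N) := fun v w h =>
  funext fun i => by exact_mod_cast (div_left_inj' (Nat.cast_ne_zero.2 hN)).1 (congrFun h i)

lemma range_eq [Finite ι] (N : ℕ) [NeZero N] :
    Set.range (latticePoint (ι := ι) N) =
      (N : ℝ)⁻¹ • (Submodule.span ℤ (Set.range (Pi.basisFun ℝ ι)) : Set (ι → ℝ)) := by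
  ext x
  rw [← Submodule.coe_pointwise_smul, SetLike.mem_coe,
    BoxIntegral.unitPartition.mem_smul_span_iff]
  constructor
  · rintro ⟨v, rfl⟩ i
    exact ⟨v i, by simp [latticePoint, mul_div_cancel₀ _ (NeZero.ne (N : ℝ))]⟩
  · intro hx
    choose v hv using hx
    refine ⟨v, funext fun i => ?_⟩
    simp only [latticePoint, eq_intCast] at hv ⊢
    rw [hv, mul_div_cancel_left₀ _ (NeZero.ne (N : ℝ))]

lemma isClosedEmbedding {N : ℕ} (hN : N ≠ 0) :
    IsClosedEmbedding (latticePoint (ι := ι) N) := by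
  have hscale := (Homeomorph.smulOfNeZero (α := ι → ℝ) (N : ℝ)⁻¹ (by positivity)).isClosedEmbedding
  convert hscale.comp (IsClosedEmbedding.piMap fun _ : ι => Int.isClosedEmbedding_coe_real) using 1
  ext v i
  simp [latticePoint, div_eq_inv_mul]

lemma summable_comp [Finite ι] {f : (ι → ℝ) → ℝ} (hf : HasCompactSupport f) {N : ℕ} (hN : N ≠ 0) :
    Summable fun v => f (latticePoint N v) :=
  summable_of_hasFiniteSupport <|
    ((isClosedEmbedding hN).isCompact_preimage hf).finite_of_discrete.subset
      fun _ hv => subset_tsupport f hv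

lemma tendsto_atTop_zero (v : ι → ℤ) : Tendsto (latticePoint · v) atTop (𝓝 0) := by
  have h := ((tendsto_inv_atTop_zero (𝕜 := ℝ)).comp tendsto_natCast_atTop_atTop).smul_const
    (fun i => (v i : ℝ))
  rw [zero_smul] at h
  refine h.congr fun N => ?_
  ext i
  simp [latticePoint, div_eq_inv_mul]

end latticePoint

lemma abs_tsum_mul_le {α : Type*} {a b : α → ℝ} (ha : Summable a) {C : ℝ}
    (hb : ∀ x, |b x| ≤ C) : |∑' x, a x * b x| ≤ (∑' x, |a x|) * C := by
  rw [← tsum_mul_right]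
  refine tsum_of_norm_bounded (f := fun x => a x * b x) (ha.abs.mul_right C).hasSum fun x => ?_
  rw [Real.norm_eq_abs, abs_mul]
  exact mul_le_mul_of_nonneg_left (hb x) (abs_nonneg _)

theorem tsum_prod_mul_sub_mul_eq {G : Type*} [AddCommGroup G] {a K : G → ℝ} (ha : Summable a)
    {C : ℝ} (haC : ∀ x, |a x| ≤ C) (hK : Summable fun z => |K z|) :
    ∑' p : G × G, a p.1 * K (p.1 - p.2) * a p.2 = ∑' z, K z * ∑' x, a x * a (x - z) := by
  let e : G × G ≃ G × G := (Equiv.prodComm G G).trans (Equiv.prodShear (Equiv.refl G) Equiv.subLeft)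
  have he : ∀ q : G × G, e q = (q.2, q.2 - q.1) := fun _ => rfl
  have hsummable : Summable fun q : G × G => a q.2 * K q.1 * a (q.2 - q.1) := by
    refine Summable.of_norm_bounded
      (hK.mul_of_nonneg (ha.abs.mul_left C) (fun _ => abs_nonneg _)
        fun _ => mul_nonneg ((abs_nonneg _).trans (haC 0)) (abs_nonneg _)) fun q => ?_
    rw [Real.norm_eq_abs, abs_mul, abs_mul]
    calc |a q.2| * |K q.1| * |a (q.2 - q.1)| ≤ |a q.2| * |K q.1| * C :=
          mul_le_mul_of_nonneg_left (haC _) (by positivity)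
      _ = |K q.1| * (C * |a q.2|) := by ring
  rw [← e.tsum_eq]
  simp only [he, sub_sub_cancel]
  rw [hsummable.tsum_prod' hsummable.prod_factor]
  refine tsum_congr fun z => ?_
  rw [← tsum_mul_left]
  exact tsum_congr fun x => by ring

noncomputable def riemannSum {ι : Type*} [Fintype ι] (f : (ι → ℝ) → ℝ) (N : ℕ) : ℝ :=
  1 / (N : ℝ) ^ Fintype.card ι * ∑' v, f (latticePoint N v)

section RiemannSum

variable {ι : Type*} [Fintype ι] {f : (ι → ℝ) → ℝ}

lemma tsum_comp_latticePoint_eq_tsum_inter {s : Set (ι → ℝ)} (hfs : ∀ x ∉ s, f x = 0)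
    (N : ℕ) [NeZero N] :
    ∑' v, f (latticePoint N v) =
      ∑' x : ↑(s ∩ (N : ℝ)⁻¹ • (Submodule.span ℤ (Set.range (Pi.basisFun ℝ ι)) : Set (ι → ℝ))),
        f x := by
  rw [← latticePoint.range_eq, tsum_subtype,
    ← (latticePoint.injective (NeZero.ne N)).tsum_eq
      (Set.support_indicator_subset.trans Set.inter_subset_right)]
  refine tsum_congr fun v => ?_
  by_cases hv : latticePoint N v ∈ s
  · rw [Set.indicator_of_mem (Set.mem_inter hv (Set.mem_range_self v))]
  · rw [Set.indicator_of_notMem (fun h => hv h.1), hfs _ hv]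

theorem tendsto_riemannSum (hf : Continuous f) (hfc : HasCompactSupport f) :
    Tendsto (riemannSum f) atTop (𝓝 (∫ y, f y)) := by
  obtain ⟨R, hR⟩ := hfc.isBounded.subset_closedBall 0
  have hfs : ∀ x ∉ Metric.closedBall 0 R, f x = 0 := fun x hx =>
    image_eq_zero_of_notMem_tsupport fun h => hx (hR h)
  have h := tendsto_tsum_div_pow_atTop_integral _ f hf Metric.isBounded_closedBall
    Metric.isClosed_closedBall.measurableSet ((convex_closedBall 0 R).addHaar_frontier volume)
  rw [setIntegral_eq_integral_of_forall_compl_eq_zero hfs] at h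
  refine h.congr' ?_
  filter_upwards [eventually_ne_atTop 0] with N hN
  have : NeZero N := ⟨hN⟩
  rw [riemannSum, tsum_comp_latticePoint_eq_tsum_inter hfs, one_div_mul_eq_div]

lemma riemannSum_add {g : (ι → ℝ) → ℝ} (hf : HasCompactSupport f) (hg : HasCompactSupport g)
    {N : ℕ} (hN : N ≠ 0) :
    riemannSum (fun y => f y + g y) N = riemannSum f N + riemannSum g N := by
  rw [riemannSum, riemannSum, riemannSum,
    (latticePoint.summable_comp hf hN).tsum_add (latticePoint.summable_comp hg hN), mul_add]

lemma abs_riemannSum_mul_le (hfc : HasCompactSupport f) {h : (ι → ℝ) → ℝ} {C : ℝ}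
    (hC : ∀ y, |h y| ≤ C) {N : ℕ} (hN : N ≠ 0) :
    |riemannSum (fun y => f y * h y) N| ≤ riemannSum (fun y => |f y|) N * C := by
  rw [riemannSum, riemannSum, abs_mul, abs_of_nonneg (by positivity), mul_assoc]
  gcongr
  exact abs_tsum_mul_le (latticePoint.summable_comp hfc hN) fun v => hC _

theorem tendsto_riemannSum_mul_sub (hf : Continuous f) (hfc : HasCompactSupport f)
    {w : ℕ → ι → ℝ} (hw : Tendsto w atTop (𝓝 0)) :
    Tendsto (fun N => riemannSum (fun y => f y * f (y - w N)) N) atTop (𝓝 (∫ y, f y * f y)) := by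
  set M := (∫ y, |f y|) + 1
  have hM : 0 < M := by positivity
  have hbound : ∀ᶠ N in atTop, riemannSum (fun y => |f y|) N < M :=
    (tendsto_riemannSum hf.abs hfc.abs).eventually_lt_const (lt_add_one _)
  have hdiff :
      Tendsto (fun N => riemannSum (fun y => f y * (f (y - w N) - f y)) N) atTop (𝓝 0) := by
    refine NormedAddGroup.tendsto_nhds_zero.2 fun ε hε => ?_
    obtain ⟨δ, hδ, hfδ⟩ := Metric.uniformContinuous_iff.1
      (hfc.uniformContinuous_of_continuous hf) (ε / M) (by positivity)
    have hwδ : ∀ᶠ N in atTop, ‖w N‖ < δ := by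
      simpa using (tendsto_norm_zero.comp hw).eventually_lt_const hδ
    filter_upwards [hbound, hwδ, eventually_ne_atTop 0] with N hMN hwN hN
    have hshift : ∀ y, |f (y - w N) - f y| ≤ ε / M := fun y =>
      (hfδ (by simpa [dist_eq_norm] using hwN)).le
    calc ‖riemannSum (fun y => f y * (f (y - w N) - f y)) N‖
        ≤ riemannSum (fun y => |f y|) N * (ε / M) := abs_riemannSum_mul_le hfc hshift hN
      _ < M * (ε / M) := by gcongr
      _ = ε := by field_simp
  have h := (tendsto_riemannSum (hf.mul hf) (hfc.mul_right (f' := f))).add hdiff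
  rw [add_zero] at h
  refine h.congr' ?_
  filter_upwards [eventually_ne_atTop 0] with N hN
  rw [← riemannSum_add (f := f * f) (g := fun y => f y * (f (y - w N) - f y))
    hfc.mul_right hfc.mul_right hN]
  congr 1 with y
  simp only [Pi.mul_apply]
  ring

lemma exists_eventually_abs_riemannSum_mul_sub_le (hf : Continuous f) (hfc : HasCompactSupport f) :
    ∃ B, ∀ᶠ N in atTop, ∀ u, |riemannSum (fun y => f y * f (y - u)) N| ≤ B := by
  obtain ⟨C, hC⟩ := hfc.exists_bound_of_continuous hf
  refine ⟨((∫ y, |f y|) + 1) * C, ?_⟩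
  filter_upwards [(tendsto_riemannSum hf.abs hfc.abs).eventually_lt_const (lt_add_one _),
    eventually_ne_atTop 0] with N hMN hN u
  calc _ ≤ riemannSum (fun y => |f y|) N * C := abs_riemannSum_mul_le hfc (fun _ => hC _) hN
    _ ≤ _ := by gcongr; exact (norm_nonneg _).trans (hC 0)

lemma one_div_pow_mul_tsum_prod_eq (hf : Continuous f) (hfc : HasCompactSupport f)
    {K : (ι → ℤ) → ℝ} (hK : Summable fun z => |K z|) {N : ℕ} (hN : N ≠ 0) :
    1 / (N : ℝ) ^ Fintype.card ι * ∑' p : (ι → ℤ) × (ι → ℤ),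
        f (latticePoint N p.1) * K (p.1 - p.2) * f (latticePoint N p.2) =
      ∑' z, K z * riemannSum (fun y => f y * f (y - latticePoint N z)) N := by
  obtain ⟨C, hC⟩ := hfc.exists_bound_of_continuous hf
  rw [tsum_prod_mul_sub_mul_eq (latticePoint.summable_comp hfc hN) (fun _ => hC _) hK]
  simp only [riemannSum, latticePoint.sub, ← tsum_mul_left]
  exact tsum_congr fun z => tsum_congr fun x => by ring

theorem tendsto_one_div_pow_mul_tsum_prod (hf : Continuous f) (hfc : HasCompactSupport f)
    {K : (ι → ℤ) → ℝ} (hK : Summable fun z => |K z|) :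
    Tendsto (fun N : ℕ => 1 / (N : ℝ) ^ Fintype.card ι * ∑' p : (ι → ℤ) × (ι → ℤ),
        f (latticePoint N p.1) * K (p.1 - p.2) * f (latticePoint N p.2))
      atTop (𝓝 ((∑' z, K z) * ∫ y, f y * f y)) := by
  obtain ⟨B, hB⟩ := exists_eventually_abs_riemannSum_mul_sub_le hf hfc
  have hdom : ∀ᶠ N in atTop, ∀ z,
      ‖K z * riemannSum (fun y => f y * f (y - latticePoint N z)) N‖ ≤ |K z| * B := by
    filter_upwards [hB] with N hBN z
    rw [norm_mul, Real.norm_eq_abs]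
    exact mul_le_mul_of_nonneg_left (hBN _) (abs_nonneg _)
  have h := tendsto_tsum_of_dominated_convergence (hK.mul_right B)
    (fun z => (tendsto_riemannSum_mul_sub hf hfc
      (latticePoint.tendsto_atTop_zero z)).const_mul (K z)) hdom
  rw [tsum_mul_right] at h
  exact h.congr' ((eventually_ne_atTop 0).mono fun N hN =>
    (one_div_pow_mul_tsum_prod_eq hf hfc hK hN).symm)

end RiemannSum

theorem stmt13_general (d : ℕ) (K : (Fin d → ℤ) → ℝ)
    (hK : Summable fun z => |K z|)
    (V : EuclideanSpace ℝ (Fin d) → ℝ) (hV : Continuous V)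
    (hVc : HasCompactSupport V) :
    Tendsto (fun N : ℕ =>
        (1 / (N : ℝ) ^ d) *
          ∑' p : (Fin d → ℤ) × (Fin d → ℤ),
            V (latE d N p.1) * K (p.1 - p.2) * V (latE d N p.2))
      atTop (𝓝 ((∑' z, K z) * ∫ y, V y ^ 2)) := by
  have hI : ∫ y : Fin d → ℝ, V (WithLp.toLp 2 y) * V (WithLp.toLp 2 y) = ∫ y, V y ^ 2 := by
    simp_rw [← sq]
    exact (PiLp.volume_preserving_toLp (Fin d)).integral_comp
      (MeasurableEquiv.toLp 2 _).measurableEmbedding fun y => V y ^ 2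
  have h := tendsto_one_div_pow_mul_tsum_prod (f := fun y => V (WithLp.toLp 2 y))
    (hV.comp (PiLp.continuous_toLp 2 _))
    (hVc.comp_homeomorph (PiLp.homeomorph 2 _).symm) hK
  rwa [Fintype.card_fin, hI] at h

theorem stmt13 (d : ℕ) (hd : 1 ≤ d) (K : (Fin d → ℤ) → ℝ)
    (hK : Summable fun z => |K z|)
    (V : EuclideanSpace ℝ (Fin d) → ℝ) (hV : Continuous V)
    (hVc : HasCompactSupport V) :
    Tendsto (fun N : ℕ =>
        (1 / (N : ℝ) ^ d) *
          ∑' p : (Fin d → ℤ) × (Fin d → ℤ),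
            V (latE d N p.1) * K (p.1 - p.2) * V (latE d N p.2))
      atTop (𝓝 ((∑' z, K z) * ∫ y, V y ^ 2)) :=
  stmt13_general d K hK V hV hVc
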